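/- If Φ = z − u(x,z) with u independent of z in the similarity variables (i.e., to leading order in 1/β with β = z/λ, α = x/√(λz)), the BPS equation 1 − |∇Φ| = λ∇·N reduces at leading order to the ODE (1/2)[α f'(α) + (f'(α))²] + f''(α) = 0 for f(α) = (z − Φ)/λ. -/
import Mathlib


/-- Leading order of the BPS asymptotic expansion: substituting a
β-independent profile `ũ(α,β) = f(α)` into the expanded equation
`0 = ∂_β ũ - (1/β)·G(ũ, ∂_α ũ, ∂_β ũ, …) + O(1/β²)` and multiplying by `β`
yields exactly `-[(1/2)(α f' + (f')²) + f'']`, so that the leading-order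
equation is `(1/2)(α f' + f'²) + f'' = 0`. -/
theorem BPS_similarity_reduction (f : ℝ → ℝ)
    (hf : Differentiable ℝ f) (hf' : Differentiable ℝ (deriv f))
    (ut : ℝ → ℝ → ℝ) (hut : ut = fun a _ => f a)
    (dbu dau dbbu dabu daau G : ℝ → ℝ → ℝ)
    (hdbu : dbu = fun a b => deriv (fun b' => ut a b') b)
    (hdau : dau = fun a b => deriv (fun a' => ut a' b) a)
    (hdbbu : dbbu = fun a b => deriv (fun b' => dbu a b') b)
    (hdabu : dabu = fun a b => deriv (fun a' => dbu a' b) a)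
    (hdaau : daau = fun a b => deriv (fun a' => dau a' b) a)
    (hG : G = fun a b =>
      (1 / (2 * (1 - dbu a b) ^ 3)) *
        (a * (1 - dbu a b) ^ 3 * dau a b
          + ((1 - dbu a b) ^ 2 - 2 * dbbu a b) * (dau a b) ^ 2
          - 4 * (1 - dbu a b) * dau a b * dabu a b
          + 2 * (1 - dbu a b) ^ 2 * daau a b)) :
    ∀ a b : ℝ, b ≠ 0 →
      b * (dbu a b - (1 / b) * G a b)
        = -((1 / 2) * (a * deriv f a + (deriv f a) ^ 2) + deriv (deriv f) a) := by
  intro a b hb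
  have hdbu0 : dbu = fun _ _ => (0:ℝ) := by
    subst hut hdbu; funext a b; simp
  subst hG hdaau hdabu hdbbu hdau hdbu0
  subst hut
  simp only [deriv_const']
  field_simp
  ring
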